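/- arXiv:1907.02639 — 5 statements merged into one kernel-verified Lean document; each statement's English description precedes it below -/
import Mathlib

section
/- Let F be an algebraically closed field of characteristic zero and let X be an n × n matrix over F whose n² entries are algebraically independent over ℚ. Then there exist an invertible lower triangular matrix L over F and an orthogonal matrix Q over F (i.e., Q · Qᵀ = I_n) such that X = L · Q. -/
/-!
Each leading principal minor of `X * Xᵀ` is the value at the entries of `X` of a polynomial over
`ℚ` which is nonzero, since it takes the value `1` at the identity matrix; by algebraic
independence these minors are therefore nonzero. A symmetric matrix with nonzero leading principal
minors over a field in which every element is a square has a Cholesky factorization `L * Lᵀ`, built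
by bordering: if `S' = A * Aᵀ` is the leading block of `S`, with last column `b` and corner `c`,
then `L = [[A, 0], [wᵀ, d]]` with `A w = b` and `d² = c - w ⬝ᵥ w`. Then `Q = L⁻¹ * X` is orthogonal.
-/

open Matrix

namespace Matrix

section Bordered

variable {R : Type*} {n : ℕ}

/-- The matrix `[[A, 0], [wᵀ, d]]`. -/
def borderLower [Zero R] (A : Matrix (Fin n) (Fin n) R) (w : Fin n → R) (d : R) :
    Matrix (Fin (n + 1)) (Fin (n + 1)) R :=
  of (Fin.lastCases (Fin.snoc w d) fun i => Fin.snoc (A i) 0)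

section Zero

variable [Zero R] (A : Matrix (Fin n) (Fin n) R) (w : Fin n → R) (d : R)

@[simp]
theorem borderLower_castSucc_castSucc (i j : Fin n) :
    borderLower A w d i.castSucc j.castSucc = A i j := by
  simp [borderLower]

@[simp]
theorem borderLower_castSucc_last (i : Fin n) : borderLower A w d i.castSucc (Fin.last n) = 0 := by
  simp [borderLower]

@[simp]
theorem borderLower_last_castSucc (j : Fin n) : borderLower A w d (Fin.last n) j.castSucc = w j := by
  simp [borderLower]

@[simp]
theorem borderLower_last_last : borderLower A w d (Fin.last n) (Fin.last n) = d := by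
  simp [borderLower]

end Zero

theorem isLowerTriangular_borderLower [Zero R] {A : Matrix (Fin n) (Fin n) R}
    (hA : A.IsLowerTriangular) (w : Fin n → R) (d : R) :
    (borderLower A w d).IsLowerTriangular := by
  intro i j (hij : i < j)
  induction j using Fin.lastCases with
  | last =>
    induction i using Fin.lastCases with
    | last => exact absurd hij (lt_irrefl _)
    | cast i => exact borderLower_castSucc_last A w d i
  | cast j =>
    induction i using Fin.lastCases with
    | last => exact absurd hij (Fin.le_last _).not_gt
    | cast i =>
      rw [borderLower_castSucc_castSucc]
      exact hA (Fin.castSucc_lt_castSucc_iff.mp hij)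

theorem IsSymm.ext_fin_succ {A B : Matrix (Fin (n + 1)) (Fin (n + 1)) R} (hA : A.IsSymm)
    (hB : B.IsSymm) (h₁ : ∀ i j : Fin n, A i.castSucc j.castSucc = B i.castSucc j.castSucc)
    (h₂ : ∀ i : Fin n, A i.castSucc (Fin.last n) = B i.castSucc (Fin.last n))
    (h₃ : A (Fin.last n) (Fin.last n) = B (Fin.last n) (Fin.last n)) : A = B := by
  ext i j
  induction j using Fin.lastCases with
  | last =>
    induction i using Fin.lastCases with
    | last => exact h₃
    | cast i => exact h₂ i
  | cast j =>
    induction i using Fin.lastCases with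
    | last => rw [hA.apply, hB.apply]; exact h₂ j
    | cast i => exact h₁ i j

theorem eq_borderLower_mul_transpose [CommRing R] {S : Matrix (Fin (n + 1)) (Fin (n + 1)) R}
    (hS : S.IsSymm) {A : Matrix (Fin n) (Fin n) R} {w : Fin n → R} {d : R}
    (h₁ : S.submatrix Fin.castSucc Fin.castSucc = A * Aᵀ)
    (h₂ : ∀ i, S i.castSucc (Fin.last n) = (A *ᵥ w) i)
    (h₃ : S (Fin.last n) (Fin.last n) = w ⬝ᵥ w + d * d) :
    S = borderLower A w d * (borderLower A w d)ᵀ := by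
  refine hS.ext_fin_succ (isSymm_mul_transpose_self _) (fun i j => ?_) (fun i => ?_) ?_ <;>
    simp only [mul_apply, transpose_apply, Fin.sum_univ_castSucc, borderLower_castSucc_castSucc,
      borderLower_castSucc_last, borderLower_last_castSucc, borderLower_last_last, mul_zero,
      zero_mul, add_zero]
  · exact congr_fun₂ h₁ i j
  · exact h₂ i
  · exact h₃

end Bordered

theorem isUnit_of_det_mul_transpose_ne_zero {K n : Type*} [Field K] [Fintype n] [DecidableEq n]
    {L : Matrix n n K} (h : (L * Lᵀ).det ≠ 0) : IsUnit L :=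
  isUnit_of_mul_isUnit_left ((isUnit_iff_isUnit_det _).mpr (isUnit_iff_ne_zero.mpr h))

theorem exists_isLowerTriangular_isUnit_eq_mul_transpose {F : Type*} [Field F]
    (hsq : ∀ a : F, IsSquare a) :
    ∀ {n : ℕ} (S : Matrix (Fin n) (Fin n) F), S.IsSymm →
      (∀ (k : ℕ) (h : k ≤ n), (S.submatrix (Fin.castLE h) (Fin.castLE h)).det ≠ 0) →
      ∃ L : Matrix (Fin n) (Fin n) F, L.IsLowerTriangular ∧ IsUnit L ∧ S = L * Lᵀ
  | 0, _, _, _ => ⟨1, fun i => i.elim0, isUnit_one, Subsingleton.elim _ _⟩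
  | n + 1, S, hS, hminors => by
    obtain ⟨A, hA, hAunit, hSA⟩ := exists_isLowerTriangular_isUnit_eq_mul_transpose hsq
      (S.submatrix Fin.castSucc Fin.castSucc) (hS.submatrix _) fun k h => hminors k (by omega)
    set w := A⁻¹ *ᵥ fun i => S i.castSucc (Fin.last n)
    obtain ⟨d, hd⟩ := hsq (S (Fin.last n) (Fin.last n) - w ⬝ᵥ w)
    have hSL : S = borderLower A w d * (borderLower A w d)ᵀ := by
      refine eq_borderLower_mul_transpose hS hSA (fun i => ?_) (by rw [← hd]; ring)
      rw [mulVec_mulVec, mul_nonsing_inv _ ((isUnit_iff_isUnit_det A).mp hAunit), one_mulVec]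
    have hSdet : S.det ≠ 0 := hminors (n + 1) le_rfl
    exact ⟨_, isLowerTriangular_borderLower hA w d,
      isUnit_of_det_mul_transpose_ne_zero (hSL ▸ hSdet), hSL⟩

theorem inv_mul_mul_transpose_inv_mul {R n : Type*} [CommRing R] [Fintype n] [DecidableEq n]
    {L X : Matrix n n R} (hL : IsUnit L) (h : X * Xᵀ = L * Lᵀ) : L⁻¹ * X * (L⁻¹ * X)ᵀ = 1 := by
  have hLdet : IsUnit L.det := (isUnit_iff_isUnit_det L).mp hL
  have hLTdet : IsUnit Lᵀ.det := by rwa [det_transpose]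
  calc L⁻¹ * X * (L⁻¹ * X)ᵀ = L⁻¹ * (X * Xᵀ) * Lᵀ⁻¹ := by
        rw [transpose_mul, transpose_nonsing_inv]; simp only [Matrix.mul_assoc]
    _ = (L⁻¹ * L) * (Lᵀ * Lᵀ⁻¹) := by rw [h]; simp only [Matrix.mul_assoc]
    _ = 1 := by rw [nonsing_inv_mul L hLdet, mul_nonsing_inv Lᵀ hLTdet, one_mul]

theorem aeval_det_submatrix_mvPolynomialX_mul_transpose {R S m n : Type*} [CommRing R]
    [CommRing S] [Algebra R S] [Fintype n] [DecidableEq n] [Fintype m] [DecidableEq m]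
    (e : m → n) (A : Matrix n n S) :
    MvPolynomial.aeval (fun p : n × n => A p.1 p.2)
        ((mvPolynomialX n n R * (mvPolynomialX n n R)ᵀ).submatrix e e).det =
      ((A * Aᵀ).submatrix e e).det := by
  have hA := mvPolynomialX_mapMatrix_aeval R A
  rw [AlgHom.mapMatrix_apply] at hA
  rw [AlgHom.map_det, AlgHom.mapMatrix_apply, ← submatrix_map, Matrix.map_mul, transpose_map, hA]

end Matrix

theorem AlgebraicIndependent.det_submatrix_mul_transpose_ne_zero {R K m n : Type*} [CommRing R]
    [Nontrivial R] [CommRing K] [Algebra R K] [Fintype n] [DecidableEq n] [Fintype m]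
    [DecidableEq m] {X : Matrix n n K} (hX : AlgebraicIndependent R fun p : n × n => X p.1 p.2)
    {e : m → n} (he : Function.Injective e) :
    ((X * Xᵀ).submatrix e e).det ≠ 0 := by
  rw [← aeval_det_submatrix_mvPolynomialX_mul_transpose (R := R)]
  refine (map_ne_zero_iff _ hX).mpr fun h => ?_
  have := aeval_det_submatrix_mvPolynomialX_mul_transpose (R := R) e (1 : Matrix n n R)
  rw [h, map_zero, transpose_one, mul_one, submatrix_one e he, det_one] at this
  exact zero_ne_one this

/-- Over an algebraically closed field `F` of characteristic zero, any `n × n`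
matrix `X` whose `n²` entries are algebraically independent over `ℚ` factors as `X = L * Q`
with `L` an invertible lower triangular matrix and `Q` orthogonal (`Q * Qᵀ = 1`). -/
theorem exists_LQ_decomposition
    (F : Type*) [Field F] [IsAlgClosed F] [CharZero F] (n : ℕ)
    (X : Matrix (Fin n) (Fin n) F)
    (hX : AlgebraicIndependent ℚ fun p : Fin n × Fin n => X p.1 p.2) :
    ∃ L Q : Matrix (Fin n) (Fin n) F,
      IsUnit L ∧ (∀ i j : Fin n, i < j → L i j = 0) ∧ Q * Qᵀ = 1 ∧ X = L * Q := by
  obtain ⟨L, hL, hLunit, hXL⟩ := exists_isLowerTriangular_isUnit_eq_mul_transpose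
    IsAlgClosed.exists_eq_mul_self (X * Xᵀ) (isSymm_mul_transpose_self X) fun k h =>
      hX.det_submatrix_mul_transpose_ne_zero (Fin.castLE_injective h)
  refine ⟨L, L⁻¹ * X, hLunit, fun i j hij => hL hij, inv_mul_mul_transpose_inv_mul hLunit hXL, ?_⟩
  rw [← Matrix.mul_assoc, mul_nonsing_inv L ((isUnit_iff_isUnit_det L).mp hLunit), one_mul]
end

section
/- Let F be an algebraically closed field of characteristic zero, n ≥ 1, and let φ be a field automorphism of F with the property that for every A ∈ GL_n(F) there exists an n × n matrix X whose entries are algebraically independent over ℚ such that φ_n(X) = X · A. Then every diagonal matrix D in the orthogonal group O_n(F) is φ_n-conjugate inside O_n(F) either to the identity matrix I_n or to the diagonal matrix diag(-1, 1, …, 1); that is, there exists Z ∈ O_n(F) with D = Z · E · φ_n(Z)⁻¹ where E = I_n or E = diag(-1, 1, …, 1). -/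
open Matrix

/-!
A diagonal orthogonal matrix has diagonal entries `±1`. Twisted conjugacy by orthogonal matrices
is transitive and compatible with block sums and reindexing, so the `-1` entries can be removed
two at a time: if `φ` negates `p` and `q` and `p ^ 2 + q ^ 2 = 1`, the reflection
`!![p, q; q, -p]` twists `-1` into `1` in dimension two. Such `p, q` exist as soon as `n ≥ 2`:
applied to a quarter turn `A`, the hypothesis yields algebraically independent `x, y` with
`φ x = y` and `φ y = -x`, and then `p = 2xy / (x² + y²)`, `q = (y² - x²) / (x² + y²)` work.
A single remaining `-1` is moved to the first position by a permutation matrix.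
-/

theorem AlgebraicIndependent.sq_add_sq_ne_zero {K A σ : Type*} [CommRing K] [Nontrivial K]
    [CommRing A] [Algebra K A] {v : σ → A} (hv : AlgebraicIndependent K v) {i i' : σ}
    (hii' : i ≠ i') : v i ^ 2 + v i' ^ 2 ≠ 0 := by
  classical
  intro h
  have hP := hv.eq_zero_of_aeval_eq_zero (MvPolynomial.X i ^ 2 + MvPolynomial.X i' ^ 2)
    (by simpa using h)
  have := congrArg (MvPolynomial.eval (Pi.single i 1)) hP
  simp [hii'.symm] at this

theorem exists_sq_add_sq_eq_one_of_map_eq_of_map_eq_neg {K : Type*} [Field K] {φ : K →+* K}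
    {x y : K} (hx : φ x = y) (hy : φ y = -x) (hxy : x ^ 2 + y ^ 2 ≠ 0) :
    ∃ p q : K, φ p = -p ∧ φ q = -q ∧ p ^ 2 + q ^ 2 = 1 := by
  have hφxy : φ (x ^ 2 + y ^ 2) = x ^ 2 + y ^ 2 := by
    rw [map_add, map_pow, map_pow, hx, hy]
    ring
  refine ⟨2 * x * y / (x ^ 2 + y ^ 2), (y ^ 2 - x ^ 2) / (x ^ 2 + y ^ 2), ?_, ?_, ?_⟩
  · rw [map_div₀, hφxy, map_mul, map_mul, map_ofNat, hx, hy]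
    ring
  · rw [map_div₀, hφxy, map_sub, map_pow, map_pow, hx, hy]
    ring
  · field_simp
    ring

namespace Matrix

variable {ι κ R : Type*} [DecidableEq ι] [DecidableEq κ] [CommRing R]

def planeEquiv {j k : ι} (hjk : j ≠ k) : Fin 2 ⊕ {a // a ≠ j ∧ a ≠ k} ≃ ι where
  toFun := Sum.elim ![j, k] Subtype.val
  invFun a := if hj : a = j then .inl 0 else if hk : a = k then .inl 1 else .inr ⟨a, hj, hk⟩
  left_inv := by
    rintro (r | ⟨a, hj, hk⟩)
    · fin_cases r <;> simp [hjk.symm]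
    · simp [hj, hk]
  right_inv a := by
    by_cases hj : a = j
    · simp [hj]
    · by_cases hk : a = k <;> simp [hj, hk, hjk.symm]

theorem diagonal_eq_reindex_fromBlocks {j k : ι} (hjk : j ≠ k) (δ : ι → R) :
    diagonal δ = reindex (planeEquiv hjk) (planeEquiv hjk)
      (fromBlocks (diagonal ![δ j, δ k]) 0 0 (diagonal fun a => δ a)) := by
  rw [fromBlocks_diagonal, reindex_apply, submatrix_diagonal_equiv]
  congr 1
  ext a
  by_cases hj : a = j
  · simp [hj, planeEquiv]
  · by_cases hk : a = k <;> simp [hj, hk, hjk.symm, planeEquiv]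

def signDiagonal (s : Finset ι) : Matrix ι ι R := diagonal fun i => if i ∈ s then -1 else 1

variable [Fintype ι] [Fintype κ]

/-- `A = Z * B * φ(Z)⁻¹` for an orthogonal `Z`, written without the inverse. -/
def IsOrthTwistedConj (φ : R →+* R) (A B : Matrix ι ι R) : Prop :=
  ∃ Z : Matrix ι ι R, Z * Zᵀ = 1 ∧ A * Z.map φ = Z * B

namespace IsOrthTwistedConj

variable {φ : R →+* R} {A B C : Matrix ι ι R}

theorem refl (φ : R →+* R) (A : Matrix ι ι R) : IsOrthTwistedConj φ A A :=
  ⟨1, by simp, by simp [Matrix.map_one _ φ.map_zero φ.map_one]⟩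

theorem trans (hAB : IsOrthTwistedConj φ A B) (hBC : IsOrthTwistedConj φ B C) :
    IsOrthTwistedConj φ A C := by
  obtain ⟨Z, hZ, hAZ⟩ := hAB
  obtain ⟨W, hW, hBW⟩ := hBC
  refine ⟨Z * W, ?_, ?_⟩
  · rw [transpose_mul, Matrix.mul_assoc, ← Matrix.mul_assoc W, hW, Matrix.one_mul, hZ]
  · rw [Matrix.map_mul, ← Matrix.mul_assoc, hAZ, Matrix.mul_assoc, hBW, Matrix.mul_assoc]

theorem exists_eq_mul_mul_inv (h : IsOrthTwistedConj φ A B) :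
    ∃ Z : Matrix ι ι R, Z * Zᵀ = 1 ∧ A = Z * B * (Z.map φ)⁻¹ := by
  obtain ⟨Z, hZ, hAZ⟩ := h
  have hφZ : Z.map φ * (Z.map φ)ᵀ = 1 := by
    rw [← transpose_map, ← Matrix.map_mul, hZ, Matrix.map_one _ φ.map_zero φ.map_one]
  refine ⟨Z, hZ, ?_⟩
  rw [inv_eq_right_inv hφZ, ← hAZ, Matrix.mul_assoc, hφZ, Matrix.mul_one]

theorem reindex (e : ι ≃ κ) (h : IsOrthTwistedConj φ A B) :
    IsOrthTwistedConj φ (Matrix.reindex e e A) (Matrix.reindex e e B) := by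
  obtain ⟨Z, hZ, hAZ⟩ := h
  refine ⟨Matrix.reindex e e Z, ?_, ?_⟩
  · simp [hZ]
  · rw [reindex_apply, reindex_apply, reindex_apply, ← submatrix_map, submatrix_mul_equiv, hAZ,
      submatrix_mul_equiv]

theorem fromBlocks {A' B' : Matrix κ κ R} (h : IsOrthTwistedConj φ A B)
    (h' : IsOrthTwistedConj φ A' B') :
    IsOrthTwistedConj φ (fromBlocks A 0 0 A') (fromBlocks B 0 0 B') := by
  obtain ⟨Z, hZ, hAZ⟩ := h
  obtain ⟨Z', hZ', hAZ'⟩ := h'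
  refine ⟨Matrix.fromBlocks Z 0 0 Z', ?_, ?_⟩
  · simp [fromBlocks_transpose, fromBlocks_multiply, hZ, hZ']
  · simp [fromBlocks_map, fromBlocks_multiply, hAZ, hAZ']

end IsOrthTwistedConj

theorem isOrthTwistedConj_diagonal_comp_perm (φ : R →+* R) (ε : ι → R) (σ : Equiv.Perm ι) :
    IsOrthTwistedConj φ (diagonal ε) (diagonal (ε ∘ σ)) := by
  refine ⟨σ⁻¹.permMatrix R, ?_, ?_⟩
  · rw [transpose_permMatrix, ← permMatrix_mul, inv_inv, mul_inv_cancel, permMatrix_one]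
  · ext a b
    simp only [Equiv.Perm.permMatrix, PEquiv.map_toMatrix, diagonal_mul, PEquiv.toMatrix_apply,
      Equiv.toPEquiv_apply, Equiv.Perm.coe_inv, Option.mem_def, Option.some.injEq, mul_ite, mul_one,
      mul_zero, mul_diagonal, Function.comp_apply, ite_mul, one_mul, zero_mul]
    split_ifs with h
    · rw [← h, Equiv.apply_symm_apply]
    · rfl

theorem isOrthTwistedConj_neg_one_one_fin_two {φ : R →+* R} {p q : R} (hp : φ p = -p)
    (hq : φ q = -q) (hpq : p ^ 2 + q ^ 2 = 1) :
    IsOrthTwistedConj φ (-1 : Matrix (Fin 2) (Fin 2) R) 1 := by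
  refine ⟨!![p, q; q, -p], ?_, ?_⟩
  · ext a b
    fin_cases a <;> fin_cases b <;> simp [mul_apply, Fin.sum_univ_two] <;>
      first | ring1 | linear_combination hpq
  · ext a b
    fin_cases a <;> fin_cases b <;> simp [hp, hq]

theorem isOrthTwistedConj_diagonal_of_pair {φ : R →+* R} {j k : ι} (hjk : j ≠ k)
    {δ δ' : ι → R} (hδj : δ j = -1) (hδk : δ k = -1) (hδ'j : δ' j = 1) (hδ'k : δ' k = 1)
    (hδδ' : ∀ a, a ≠ j → a ≠ k → δ a = δ' a)
    (hrot : ∃ p q : R, φ p = -p ∧ φ q = -q ∧ p ^ 2 + q ^ 2 = 1) :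
    IsOrthTwistedConj φ (diagonal δ) (diagonal δ') := by
  obtain ⟨p, q, hp, hq, hpq⟩ := hrot
  have hblock := (isOrthTwistedConj_neg_one_one_fin_two hp hq hpq).fromBlocks
    (.refl φ (diagonal fun a : {a // a ≠ j ∧ a ≠ k} => δ a))
  rw [diagonal_eq_reindex_fromBlocks hjk δ, diagonal_eq_reindex_fromBlocks hjk δ']
  convert hblock.reindex (planeEquiv hjk) using 4
  · ext a b; fin_cases a <;> fin_cases b <;> simp [hδj, hδk]
  · ext a b; fin_cases a <;> fin_cases b <;> simp [hδ'j, hδ'k]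
  · ext ⟨a, haj, hak⟩
    exact (hδδ' a haj hak).symm

theorem exists_isOrthTwistedConj_signDiagonal_card_le_one {φ : R →+* R}
    (hrot : Nontrivial ι → ∃ p q : R, φ p = -p ∧ φ q = -q ∧ p ^ 2 + q ^ 2 = 1) (s : Finset ι) :
    ∃ t : Finset ι, t.card ≤ 1 ∧ IsOrthTwistedConj φ (signDiagonal s) (signDiagonal t) := by
  induction s using Finset.strongInduction with
  | H s ih =>
    by_cases hs : s.card ≤ 1
    · exact ⟨s, hs, .refl φ _⟩
    obtain ⟨j, hj, k, hk, hjk⟩ := Finset.one_lt_card.mp (not_le.mp hs)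
    have hpair : {j, k} ⊆ s := Finset.insert_subset hj (Finset.singleton_subset_iff.mpr hk)
    obtain ⟨t, ht, hst⟩ := ih (s \ {j, k}) (Finset.sdiff_ssubset hpair (by simp))
    refine ⟨t, ht, .trans ?_ hst⟩
    exact isOrthTwistedConj_diagonal_of_pair hjk (by simp [hj]) (by simp [hk]) (by simp)
      (by simp) (fun a haj hak => by simp [haj, hak]) (hrot ⟨j, k, hjk⟩)

theorem isOrthTwistedConj_signDiagonal_singleton (φ : R →+* R) (l l' : ι) :
    IsOrthTwistedConj φ (signDiagonal {l}) (signDiagonal {l'}) := by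
  rw [signDiagonal, signDiagonal]
  convert isOrthTwistedConj_diagonal_comp_perm φ _ (Equiv.swap l l') using 2
  ext i
  simp [Equiv.swap_apply_eq_iff]

theorem IsDiag.exists_eq_signDiagonal [NoZeroDivisors R] {D : Matrix ι ι R} (hD : D.IsDiag)
    (hDD : D * Dᵀ = 1) : ∃ s : Finset ι, D = signDiagonal s := by
  classical
  have hsq : ∀ i, D i i = 1 ∨ D i i = -1 := by
    intro i
    rw [← mul_self_eq_one_iff]
    rw [← hD.diagonal_diag, diagonal_transpose, diagonal_mul_diagonal, ← diagonal_one] at hDD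
    exact congrFun (diagonal_injective hDD) i
  refine ⟨Finset.univ.filter fun i => D i i = -1, ?_⟩
  rw [← hD.diagonal_diag, signDiagonal]
  congr 1
  ext i
  rcases hsq i with h | h <;> simp [h]

theorem exists_map_eq_map_eq_neg_of_forall_isUnit {F : Type*} [Field F] [CharZero F]
    {φ : F →+* F} {j k : ι} (hjk : j ≠ k)
    (hφ : ∀ A : Matrix ι ι F, IsUnit A → ∃ X : Matrix ι ι F,
      AlgebraicIndependent ℚ (fun p : ι × ι => X p.1 p.2) ∧ X.map φ = X * A) :
    ∃ x y : F, φ x = y ∧ φ y = -x ∧ x ^ 2 + y ^ 2 ≠ 0 := by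
  let e := planeEquiv hjk
  let quarterTurn : Matrix ι ι F := Matrix.reindex e e (Matrix.fromBlocks !![0, -1; 1, 0] 0 0 1)
  obtain ⟨X, hX, hXA⟩ :=
    hφ quarterTurn (by simp [quarterTurn, isUnit_iff_isUnit_det, det_fin_two_of])
  have hφX :
      ∀ s, φ (X j (e s)) = ∑ t, X j (e t) * Matrix.fromBlocks !![0, -1; 1, 0] 0 0 1 t s := by
    intro s
    rw [← map_apply (f := φ), hXA, mul_apply, ← e.sum_comp]
    simp [quarterTurn]
  refine ⟨X j j, X j k, ?_, ?_,
    hX.sq_add_sq_ne_zero (i := (j, j)) (i' := (j, k)) (by simp [hjk])⟩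
  · simpa [Fintype.sum_sum_type, e, planeEquiv] using hφX (.inl 0)
  · simpa [Fintype.sum_sum_type, e, planeEquiv] using hφX (.inl 1)

end Matrix

theorem diagonal_orthogonal_twisted_conjugate_general
    (F : Type*) [Field F] [CharZero F] (n : ℕ)
    (φ : F ≃+* F)
    (hφ : ∀ A : Matrix (Fin n) (Fin n) F, IsUnit A →
      ∃ X : Matrix (Fin n) (Fin n) F,
        AlgebraicIndependent ℚ (fun p : Fin n × Fin n => X p.1 p.2) ∧ X.map ⇑φ = X * A)
    (D : Matrix (Fin n) (Fin n) F) (hD : D * Dᵀ = 1)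
    (hdiag : ∀ i j : Fin n, i ≠ j → D i j = 0) :
    ∃ Z E : Matrix (Fin n) (Fin n) F, Z * Zᵀ = 1 ∧
      (E = 1 ∨ E = Matrix.diagonal (fun i : Fin n => if (i : ℕ) = 0 then (-1 : F) else 1)) ∧
      D = Z * E * (Z.map ⇑φ)⁻¹ := by
  have hrot (_ : Nontrivial (Fin n)) :
      ∃ p q : F, (φ : F →+* F) p = -p ∧ (φ : F →+* F) q = -q ∧ p ^ 2 + q ^ 2 = 1 := by
    obtain ⟨j, k, hjk⟩ := exists_pair_ne (Fin n)
    obtain ⟨x, y, hx, hy, hxy⟩ :=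
      exists_map_eq_map_eq_neg_of_forall_isUnit (φ := (φ : F →+* F)) hjk hφ
    exact exists_sq_add_sq_eq_one_of_map_eq_of_map_eq_neg hx hy hxy
  obtain ⟨s, rfl⟩ := IsDiag.exists_eq_signDiagonal hdiag hD
  obtain ⟨t, ht, hst⟩ := exists_isOrthTwistedConj_signDiagonal_card_le_one hrot s
  rcases Nat.le_one_iff_eq_zero_or_eq_one.mp ht with ht | ht
  · obtain ⟨Z, hZ, hsZ⟩ := hst.exists_eq_mul_mul_inv
    refine ⟨Z, 1, hZ, .inl rfl, ?_⟩
    simpa [Finset.card_eq_zero.mp ht, signDiagonal] using hsZ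
  · obtain ⟨l, rfl⟩ := Finset.card_eq_one.mp ht
    obtain ⟨Z, hZ, hsZ⟩ :=
      (hst.trans (isOrthTwistedConj_signDiagonal_singleton _ l ⟨0, l.pos⟩)).exists_eq_mul_mul_inv
    refine ⟨Z, _, hZ, .inr rfl, ?_⟩
    simpa [signDiagonal, Fin.ext_iff] using hsZ

/-- Let `F` be algebraically closed of characteristic zero, `n ≥ 1`, and `φ` a
field automorphism of `F` such that for every `A ∈ GLₙ(F)` there is a matrix `X` with entries
algebraically independent over `ℚ` satisfying `φₙ(X) = X * A`. Then every diagonal orthogonal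
matrix `D` is `φₙ`-conjugate inside `Oₙ(F)` to `Iₙ` or to `diag(-1, 1, …, 1)`:
`D = Z * E * φₙ(Z)⁻¹` with `Z ∈ Oₙ(F)` and `E = Iₙ` or `E = diag(-1, 1, …, 1)`. -/
theorem diagonal_orthogonal_twisted_conjugate
    (F : Type*) [Field F] [IsAlgClosed F] [CharZero F] (n : ℕ) (hn : 1 ≤ n)
    (φ : F ≃+* F)
    (hφ : ∀ A : Matrix (Fin n) (Fin n) F, IsUnit A →
      ∃ X : Matrix (Fin n) (Fin n) F,
        AlgebraicIndependent ℚ (fun p : Fin n × Fin n => X p.1 p.2) ∧ X.map ⇑φ = X * A)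
    (D : Matrix (Fin n) (Fin n) F) (hD : D * Dᵀ = 1)
    (hdiag : ∀ i j : Fin n, i ≠ j → D i j = 0) :
    ∃ Z E : Matrix (Fin n) (Fin n) F, Z * Zᵀ = 1 ∧
      (E = 1 ∨ E = Matrix.diagonal (fun i : Fin n => if (i : ℕ) = 0 then (-1 : F) else 1)) ∧
      D = Z * E * (Z.map ⇑φ)⁻¹ :=
  diagonal_orthogonal_twisted_conjugate_general F n φ hφ D hD hdiag
end

section
/- Let F be an algebraically closed field of characteristic zero and let X be a 2n × 2n matrix over F whose (2n)² entries are algebraically independent over ℚ. Then there exist a matrix Q in the symplectic group Sp_{2n}(F) (i.e., Q · Ω_n · Qᵀ = Ω_n, where Ω_n is the direct sum of n copies of the 2 × 2 matrix J = [[0,1],[-1,0]]) and an invertible lower block triangular matrix L with 2 × 2 blocks (viewing 2n × 2n matrices as n × n matrices over 2 × 2 blocks, all blocks of L strictly above the block diagonal vanish) such that X = L · Q. -/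
/-!
With `Ω = blockJ F n`, the matrix `M = X Ω Xᵀ` is alternating, and `X = L Q` with `Q` symplectic
amounts to `M = L Ω Lᵀ` (take `Q = L⁻¹ X`). Such a block Cholesky factorisation exists as soon as
all leading principal `2k × 2k` blocks of `M` are nonsingular: split off the last block row; its
Schur complement is again alternating, and a nonsingular alternating `2 × 2` matrix is `a • J`.
The leading minors are polynomials over `ℚ` in the entries of `X` taking the value `1` at
`X = 1`, so they do not vanish at algebraically independent entries.
-/

open Matrix

def finProdSuccEquiv (α : Type*) (n : ℕ) : α × Fin (n + 1) ≃ α × Fin n ⊕ α where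
  toFun p := Fin.lastCases (Sum.inr p.1) (fun j => Sum.inl (p.1, j)) p.2
  invFun := Sum.elim (fun p => (p.1, p.2.castSucc)) (fun a => (a, Fin.last n))
  left_inv := by
    rintro ⟨a, j⟩
    induction j using Fin.lastCases <;> simp
  right_inv := by rintro (⟨a, j⟩ | a) <;> simp

namespace Matrix

section TwoByTwo

variable (R : Type*) [CommRing R]

def J₂ : Matrix (Fin 2) (Fin 2) R := !![0, 1; -1, 0]

variable {R}

theorem J₂_transpose : (J₂ R)ᵀ = -J₂ R := by
  ext i j; fin_cases i <;> fin_cases j <;> simp [J₂]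

@[simp] theorem det_J₂ : (J₂ R).det = 1 := by simp [J₂, det_fin_two_of]

theorem J₂_map {S : Type*} [CommRing S] (f : R →+* S) : (J₂ R).map f = J₂ S := by
  ext i j; fin_cases i <;> fin_cases j <;> simp [J₂]

theorem diagonal_mul_J₂_mul_transpose (a : R) :
    diagonal ![a, 1] * J₂ R * (diagonal ![a, 1])ᵀ = a • J₂ R := by
  ext i j; fin_cases i <;> fin_cases j <;> simp [J₂, mul_apply, diagonal]

theorem eq_smul_J₂_of_transpose_eq_neg {F : Type*} [Field F] [NeZero (2 : F)]
    {T : Matrix (Fin 2) (Fin 2) F} (hT : Tᵀ = -T) : T = T 0 1 • J₂ F := by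
  have h : ∀ i j, T j i = -T i j := fun i j => congrFun (congrFun hT i) j
  have hdiag : ∀ i, T i i = 0 := fun i => by
    have : (2 : F) * T i i = 0 := by linear_combination h i i
    exact (mul_eq_zero.mp this).resolve_left two_ne_zero
  ext i j; fin_cases i <;> fin_cases j <;> simp [J₂, hdiag, h 0 1]

theorem exists_mul_J₂_mul_transpose_eq {F : Type*} [Field F] [NeZero (2 : F)]
    {T : Matrix (Fin 2) (Fin 2) F} (hT : Tᵀ = -T) (hdet : T.det ≠ 0) :
    ∃ l : Matrix (Fin 2) (Fin 2) F, IsUnit l ∧ l * J₂ F * lᵀ = T := by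
  have hT' := eq_smul_J₂_of_transpose_eq_neg hT
  have ht : T 0 1 ≠ 0 := by
    rw [hT', det_smul, det_J₂] at hdet
    simpa using hdet
  refine ⟨diagonal ![T 0 1, 1], ?_, by rw [diagonal_mul_J₂_mul_transpose, ← hT']⟩
  simp [isUnit_iff_isUnit_det, ht]

end TwoByTwo

section Blocks

variable {α R : Type*}

def leadingBlock {k n : ℕ} (hk : k ≤ n) (M : Matrix (α × Fin n) (α × Fin n) R) :
    Matrix (α × Fin k) (α × Fin k) R :=
  M.submatrix (Prod.map id (Fin.castLE hk)) (Prod.map id (Fin.castLE hk))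

@[simp] theorem leadingBlock_self {n : ℕ} (M : Matrix (α × Fin n) (α × Fin n) R) :
    leadingBlock le_rfl M = M := by
  ext; simp [leadingBlock]

theorem leadingBlock_leadingBlock {j k n : ℕ} (hj : j ≤ k) (hk : k ≤ n)
    (M : Matrix (α × Fin n) (α × Fin n) R) :
    leadingBlock hj (leadingBlock hk M) = leadingBlock (hj.trans hk) M := by
  ext ⟨a, i⟩ ⟨b, j⟩; simp [leadingBlock]

theorem leadingBlock_submatrix_finProdSuccEquiv {n : ℕ} (A : Matrix (α × Fin n) (α × Fin n) R)
    (B : Matrix (α × Fin n) α R) (C : Matrix α (α × Fin n) R) (D : Matrix α α R) :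
    leadingBlock n.le_succ ((fromBlocks A B C D).submatrix
      (finProdSuccEquiv α n) (finProdSuccEquiv α n)) = A := by
  ext ⟨a, i⟩ ⟨b, j⟩
  have hcast : ∀ i : Fin n, Fin.castLE n.le_succ i = i.castSucc := fun _ => rfl
  simp [leadingBlock, finProdSuccEquiv, hcast]

end Blocks

section BlockJ

variable (R : Type*) [CommRing R]

def blockJ (n : ℕ) : Matrix (Fin 2 × Fin n) (Fin 2 × Fin n) R :=
  blockDiagonal fun _ => J₂ R

variable {R}

theorem blockJ_transpose (n : ℕ) : (blockJ R n)ᵀ = -blockJ R n := by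
  simp only [blockJ, blockDiagonal_transpose, J₂_transpose]
  exact blockDiagonal_neg _

@[simp] theorem det_blockJ (n : ℕ) : (blockJ R n).det = 1 := by
  simp [blockJ, det_blockDiagonal]

theorem blockJ_map {S : Type*} [CommRing S] (f : R →+* S) (n : ℕ) :
    (blockJ R n).map f = blockJ S n := by
  simp [blockJ, blockDiagonal_map, J₂_map]

theorem leadingBlock_blockJ {k n : ℕ} (hk : k ≤ n) : leadingBlock hk (blockJ R n) = blockJ R k := by
  ext ⟨a, i⟩ ⟨b, j⟩
  simp [leadingBlock, blockJ, blockDiagonal_apply, Fin.castLE_inj]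

theorem blockJ_succ (n : ℕ) :
    blockJ R (n + 1) = (fromBlocks (blockJ R n) 0 0 (J₂ R)).submatrix
      (finProdSuccEquiv (Fin 2) n) (finProdSuccEquiv (Fin 2) n) := by
  ext ⟨a, i⟩ ⟨b, j⟩
  induction i using Fin.lastCases <;> induction j using Fin.lastCases <;>
    simp [blockJ, blockDiagonal_apply, finProdSuccEquiv, Fin.castSucc_ne_last,
      (Fin.castSucc_ne_last _).symm]

end BlockJ

section SkewBlocks

variable {m p R : Type*} [CommRing R]

theorem fromBlocks_transpose_eq_neg_iff {A : Matrix m m R} {B : Matrix m p R}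
    {C : Matrix p m R} {D : Matrix p p R} :
    (fromBlocks A B C D)ᵀ = -fromBlocks A B C D ↔ Aᵀ = -A ∧ C = -Bᵀ ∧ Dᵀ = -D := by
  rw [fromBlocks_transpose, fromBlocks_neg, fromBlocks_inj]
  constructor
  · rintro ⟨hA, -, hB, hD⟩
    exact ⟨hA, by rw [hB, neg_neg], hD⟩
  · rintro ⟨hA, rfl, hD⟩
    exact ⟨hA, by simp, by simp, hD⟩

variable [Fintype m] [DecidableEq m] {A : Matrix m m R} [Invertible A]

theorem transpose_invOf_eq_neg (hA : Aᵀ = -A) : (⅟A)ᵀ = -⅟A := by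
  have h : -(⅟A)ᵀ * A = 1 := by
    rw [Matrix.neg_mul, ← Matrix.mul_neg, ← hA, ← transpose_mul, mul_invOf_self, transpose_one]
  exact neg_eq_iff_eq_neg.mp (invOf_eq_left_inv h).symm

theorem transpose_schur_eq_neg (hA : Aᵀ = -A) (B : Matrix m p R) {D : Matrix p p R}
    (hD : Dᵀ = -D) : (D + Bᵀ * ⅟A * B)ᵀ = -(D + Bᵀ * ⅟A * B) := by
  rw [transpose_add, transpose_mul, transpose_mul, transpose_transpose, transpose_invOf_eq_neg hA,
    hD]
  simp only [Matrix.neg_mul, Matrix.mul_neg, Matrix.mul_assoc]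
  abel

theorem fromBlocks_eq_mul_fromBlocks_mul_transpose [Fintype p] (hA : Aᵀ = -A) (B : Matrix m p R)
    (D : Matrix p p R) {P Ω₁ : Matrix m m R} {Q Ω₂ : Matrix p p R}
    (hP : P * Ω₁ * Pᵀ = A) (hQ : Q * Ω₂ * Qᵀ = D + Bᵀ * ⅟A * B) :
    fromBlocks A B (-Bᵀ) D = fromBlocks P 0 (-Bᵀ * ⅟A * P) Q * fromBlocks Ω₁ 0 0 Ω₂ *
      (fromBlocks P 0 (-Bᵀ * ⅟A * P) Q)ᵀ := by
  simp only [fromBlocks_transpose, fromBlocks_multiply, transpose_zero, Matrix.mul_zero,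
    Matrix.zero_mul, add_zero, zero_add, transpose_mul, transpose_neg, transpose_transpose]
  have hPB : P * (Ω₁ * (Pᵀ * ((⅟A)ᵀ * -B))) = B := by
    rw [← Matrix.mul_assoc, ← Matrix.mul_assoc, hP, transpose_invOf_eq_neg hA]
    simp only [Matrix.neg_mul, Matrix.mul_neg, neg_neg, Matrix.mul_invOf_cancel_left]
  congr 1
  · exact hP.symm
  · rw [Matrix.mul_assoc, hPB]
  · rw [Matrix.mul_assoc _ P, Matrix.mul_assoc, hP, Matrix.mul_assoc, invOf_mul_self,
      Matrix.mul_one]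
  · rw [hQ]
    simp only [Matrix.mul_assoc, hPB, Matrix.neg_mul]
    abel

theorem det_fromBlocks_neg_transpose [Fintype p] [DecidableEq p] (B : Matrix m p R)
    (D : Matrix p p R) : (fromBlocks A B (-Bᵀ) D).det = A.det * (D + Bᵀ * ⅟A * B).det := by
  rw [det_fromBlocks₁₁, Matrix.neg_mul, Matrix.neg_mul, sub_neg_eq_add]

end SkewBlocks

theorem BlockTriangular.fromBlocks_submatrix_finProdSuccEquiv {α R : Type*} [Zero R] {n : ℕ}
    {L : Matrix (α × Fin n) (α × Fin n) R} (hL : L.BlockTriangular (OrderDual.toDual ∘ Prod.snd))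
    (C : Matrix α (α × Fin n) R) (l : Matrix α α R) :
    ((fromBlocks L 0 C l).submatrix (finProdSuccEquiv α n) (finProdSuccEquiv α n)).BlockTriangular
      (OrderDual.toDual ∘ Prod.snd) := by
  rintro ⟨a, i⟩ ⟨b, j⟩ hij
  rw [Function.comp_apply, Function.comp_apply, OrderDual.toDual_lt_toDual] at hij
  induction i using Fin.lastCases with
  | last => exact absurd hij (not_lt_of_ge (Fin.le_last j))
  | cast i =>
    induction j using Fin.lastCases with
    | last => simp [finProdSuccEquiv]
    | cast j => simpa [finProdSuccEquiv] using hL (OrderDual.toDual_lt_toDual.mpr hij)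

variable {F : Type*} [Field F] [NeZero (2 : F)]

theorem exists_blockTriangular_mul_blockJ_mul_transpose_eq {n : ℕ}
    (M : Matrix (Fin 2 × Fin n) (Fin 2 × Fin n) F) (hM : Mᵀ = -M)
    (hlead : ∀ k (hk : k ≤ n), (leadingBlock hk M).det ≠ 0) :
    ∃ L : Matrix (Fin 2 × Fin n) (Fin 2 × Fin n) F, IsUnit L ∧
      L.BlockTriangular (OrderDual.toDual ∘ Prod.snd) ∧ L * blockJ F n * Lᵀ = M := by
  induction n with
  | zero => exact ⟨1, isUnit_one, blockTriangular_one, Subsingleton.elim _ _⟩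
  | succ n ih =>
    set e := finProdSuccEquiv (Fin 2) n
    obtain ⟨A, B, C, D, rfl⟩ : ∃ A B C D, M = (fromBlocks A B C D).submatrix e e := by
      set N := M.submatrix e.symm e.symm
      refine ⟨N.toBlocks₁₁, N.toBlocks₁₂, N.toBlocks₂₁, N.toBlocks₂₂, ?_⟩
      rw [fromBlocks_toBlocks, submatrix_submatrix, e.symm_comp_self, submatrix_id_id]
    have hA : leadingBlock n.le_succ ((fromBlocks A B C D).submatrix e e) = A :=
      leadingBlock_submatrix_finProdSuccEquiv A B C D
    obtain ⟨hAskew, rfl, hDskew⟩ := fromBlocks_transpose_eq_neg_iff.mp <|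
      (reindex e.symm e.symm).injective <| by
        rw [reindex_apply, reindex_apply, Equiv.symm_symm, ← transpose_submatrix]; exact hM
    obtain ⟨L', hL'unit, hL'tri, hL'⟩ := ih A hAskew fun k hk => by
      rw [← hA, leadingBlock_leadingBlock]; exact hlead k _
    have : Invertible A := invertibleOfIsUnitDet A (isUnit_iff_ne_zero.mpr (hA ▸ hlead n _))
    have hdet := hlead (n + 1) le_rfl
    rw [leadingBlock_self, det_submatrix_equiv_self, det_fromBlocks_neg_transpose B D] at hdet
    obtain ⟨l, hlunit, hl⟩ := exists_mul_J₂_mul_transpose_eq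
      (transpose_schur_eq_neg hAskew B hDskew) (right_ne_zero_of_mul hdet)
    refine ⟨(fromBlocks L' 0 (-Bᵀ * ⅟A * L') l).submatrix e e, ?_,
      hL'tri.fromBlocks_submatrix_finProdSuccEquiv _ _, ?_⟩
    · rw [isUnit_iff_isUnit_det, det_submatrix_equiv_self, det_fromBlocks_zero₁₂]
      exact ((isUnit_iff_isUnit_det _).mp hL'unit).mul ((isUnit_iff_isUnit_det _).mp hlunit)
    · rw [blockJ_succ, transpose_submatrix, submatrix_mul_equiv, submatrix_mul_equiv,
        ← fromBlocks_eq_mul_fromBlocks_mul_transpose hAskew B D hL' hl]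

theorem map_det_leadingBlock_mul_blockJ_mul_transpose {R S : Type*} [CommRing R] [CommRing S]
    (f : R →+* S) {k n : ℕ} (hk : k ≤ n) (Y : Matrix (Fin 2 × Fin n) (Fin 2 × Fin n) R) :
    f (leadingBlock hk (Y * blockJ R n * Yᵀ)).det
      = (leadingBlock hk (Y.map f * blockJ S n * (Y.map f)ᵀ)).det := by
  rw [RingHom.map_det, RingHom.mapMatrix_apply, leadingBlock, ← submatrix_map, Matrix.map_mul,
    Matrix.map_mul, transpose_map, blockJ_map, leadingBlock]

theorem det_leadingBlock_mul_blockJ_mul_transpose_ne_zero {R A : Type*} [CommRing R]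
    [Nontrivial R] [CommRing A] [Algebra R A] {k n : ℕ} (hk : k ≤ n)
    {X : Matrix (Fin 2 × Fin n) (Fin 2 × Fin n) A}
    (hX : AlgebraicIndependent R fun p : (Fin 2 × Fin n) × (Fin 2 × Fin n) => X p.1 p.2) :
    (leadingBlock hk (X * blockJ A n * Xᵀ)).det ≠ 0 := by
  set Xgen := mvPolynomialX (Fin 2 × Fin n) (Fin 2 × Fin n) R
  have hgen : (leadingBlock hk (Xgen * blockJ _ n * Xgenᵀ)).det ≠ 0 := by
    intro h
    set ev := MvPolynomial.eval fun p : (Fin 2 × Fin n) × (Fin 2 × Fin n) =>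
      (1 : Matrix (Fin 2 × Fin n) (Fin 2 × Fin n) R) p.1 p.2
    have hev : Xgen.map ev = 1 := mvPolynomialX_mapMatrix_eval 1
    have := congrArg ev h
    rw [map_det_leadingBlock_mul_blockJ_mul_transpose, hev] at this
    simp [leadingBlock_blockJ] at this
  set ev := MvPolynomial.aeval (R := R) fun p : (Fin 2 × Fin n) × (Fin 2 × Fin n) => X p.1 p.2
  have hev : Xgen.map ev = X := mvPolynomialX_map_eval₂ _ X
  have := map_det_leadingBlock_mul_blockJ_mul_transpose ev.toRingHom hk Xgen
  simp only [AlgHom.toRingHom_eq_coe, RingHom.coe_coe, hev] at this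
  rw [← this]
  exact fun h => hgen (hX.eq_zero_of_aeval_eq_zero _ h)

end Matrix

theorem exists_symplectic_LQ_decomposition_general
    (F : Type*) [Field F] [CharZero F] (n : ℕ)
    (X : Matrix (Fin 2 × Fin n) (Fin 2 × Fin n) F)
    (hX : AlgebraicIndependent ℚ
      fun p : (Fin 2 × Fin n) × (Fin 2 × Fin n) => X p.1 p.2) :
    ∃ L Q : Matrix (Fin 2 × Fin n) (Fin 2 × Fin n) F,
      IsUnit L ∧ (∀ p q : Fin 2 × Fin n, p.2 < q.2 → L p q = 0) ∧
      Q * Matrix.blockDiagonal (fun _ : Fin n => (!![0, 1; -1, 0] : Matrix (Fin 2) (Fin 2) F)) * Qᵀ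
        = Matrix.blockDiagonal (fun _ : Fin n => (!![0, 1; -1, 0] : Matrix (Fin 2) (Fin 2) F)) ∧
      X = L * Q := by
  have hskew : (X * blockJ F n * Xᵀ)ᵀ = -(X * blockJ F n * Xᵀ) := by
    simp [transpose_mul, blockJ_transpose, Matrix.mul_assoc]
  obtain ⟨L, hLunit, hLtri, hL⟩ := exists_blockTriangular_mul_blockJ_mul_transpose_eq _ hskew
    fun k hk => det_leadingBlock_mul_blockJ_mul_transpose_ne_zero hk hX
  have hLdet : IsUnit L.det := (isUnit_iff_isUnit_det L).mp hLunit
  have hQ : L⁻¹ * X * blockJ F n * (L⁻¹ * X)ᵀ = blockJ F n := calc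
    L⁻¹ * X * blockJ F n * (L⁻¹ * X)ᵀ = L⁻¹ * (X * blockJ F n * Xᵀ) * L⁻¹ᵀ := by
      simp only [transpose_mul, Matrix.mul_assoc]
    _ = L⁻¹ * L * blockJ F n * (L⁻¹ * L)ᵀ := by
      rw [← hL]; simp only [transpose_mul, Matrix.mul_assoc]
    _ = blockJ F n := by simp [nonsing_inv_mul L hLdet]
  exact ⟨L, L⁻¹ * X, hLunit, fun p q h => hLtri (OrderDual.toDual_lt_toDual.mpr h), hQ,
    (mul_nonsing_inv_cancel_left L X hLdet).symm⟩

/-- Over an algebraically closed field `F` of characteristic zero, any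
`2n × 2n` matrix `X` (indexed by `Fin 2 × Fin n`, i.e. `n × n` blocks of size `2 × 2`) whose
entries are algebraically independent over `ℚ` factors as `X = L * Q` with `Q` symplectic
(`Q * Ωₙ * Qᵀ = Ωₙ`, where `Ωₙ` is the direct sum of `n` copies of `J = !![0, 1; -1, 0]`)
and `L` an invertible lower block triangular matrix with `2 × 2` blocks. -/
theorem exists_symplectic_LQ_decomposition
    (F : Type*) [Field F] [IsAlgClosed F] [CharZero F] (n : ℕ)
    (X : Matrix (Fin 2 × Fin n) (Fin 2 × Fin n) F)
    (hX : AlgebraicIndependent ℚ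
      fun p : (Fin 2 × Fin n) × (Fin 2 × Fin n) => X p.1 p.2) :
    ∃ L Q : Matrix (Fin 2 × Fin n) (Fin 2 × Fin n) F,
      IsUnit L ∧ (∀ p q : Fin 2 × Fin n, p.2 < q.2 → L p q = 0) ∧
      Q * Matrix.blockDiagonal (fun _ : Fin n => (!![0, 1; -1, 0] : Matrix (Fin 2) (Fin 2) F)) * Qᵀ
        = Matrix.blockDiagonal (fun _ : Fin n => (!![0, 1; -1, 0] : Matrix (Fin 2) (Fin 2) F)) ∧
      X = L * Q :=
  exists_symplectic_LQ_decomposition_general F n X hX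
end

section
/- Let F be an algebraically closed field of characteristic zero, let n ≥ 2 be an even integer, and let φ be a field automorphism of F with the property that for every A ∈ GL_n(F) there exists an n × n matrix X whose entries are algebraically independent over ℚ such that φ_n(X) = X · A. Let D = D_1 ⊕ ⋯ ⊕ D_{n/2} be a block diagonal matrix with each D_k ∈ SL_2(F). Then there exists Y ∈ Sp_n(F) with D = Y⁻¹ · φ_n(Y); that is, D is φ_n-conjugate to the identity matrix in the symplectic group Sp_n(F). -/
/-!
Take `X` with algebraically independent entries and `φ(X) = X · D`. Since `D` is block diagonal,
each diagonal `2 × 2` block `Z_k` of `X` satisfies `φ(Z_k) = Z_k · D_k`; its determinant is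
nonzero (the generic determinant is a nonzero polynomial) and, as `det D_k = 1`, fixed by `φ`.
Dividing the first row of `Z_k` by `det Z_k` gives `Y_k ∈ SL₂(F)` with `φ(Y_k) = Y_k · D_k`,
and `Y = Y_1 ⊕ ⋯ ⊕ Y_m` is symplectic because every matrix in `SL₂` preserves `J`.
-/

open Matrix

theorem AlgebraicIndependent.det_ne_zero {n R A : Type*} [Fintype n] [DecidableEq n]
    [CommRing R] [Nontrivial R] [CommRing A] [Algebra R A] {M : Matrix n n A}
    (hM : AlgebraicIndependent R fun p : n × n => M p.1 p.2) : M.det ≠ 0 := by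
  have hdet : MvPolynomial.aeval (fun p : n × n => M p.1 p.2) (mvPolynomialX n n R).det
      = M.det := by
    rw [AlgHom.map_det, mvPolynomialX_mapMatrix_aeval]
  exact hdet ▸ fun h => det_mvPolynomialX_ne_zero n R (hM.eq_zero_of_aeval_eq_zero _ h)

theorem AlgebraicIndependent.det_submatrix_ne_zero {ι n R A : Type*} [Fintype n]
    [DecidableEq n] [CommRing R] [Nontrivial R] [CommRing A] [Algebra R A] {X : Matrix ι ι A}
    (hX : AlgebraicIndependent R fun p : ι × ι => X p.1 p.2) {e : n → ι}
    (he : Function.Injective e) : (X.submatrix e e).det ≠ 0 :=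
  det_ne_zero (hX.comp (Prod.map e e) (he.prodMap he))

namespace Matrix

theorem submatrix_mul_blockDiagonal {k l m n o R : Type*} [Fintype m] [Fintype o]
    [DecidableEq o] [NonUnitalNonAssocSemiring R] (X : Matrix l (m × o) R)
    (D : o → Matrix m n R) (r : k → l) (c : o) :
    (X * blockDiagonal D).submatrix r (·, c) = X.submatrix r (·, c) * D c := by
  ext i j
  simp [mul_apply, Fintype.sum_prod_type, blockDiagonal_apply]

theorem exists_det_eq_one_map_eq_mul {n F : Type*} [Fintype n] [DecidableEq n] [Nonempty n]
    [Field F] (φ : F →+* F) {Z D : Matrix n n F} (hZ : Z.det ≠ 0) (hD : D.det = 1)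
    (h : Z.map φ = Z * D) : ∃ Y : Matrix n n F, Y.det = 1 ∧ Y.map φ = Y * D := by
  have hfix : φ Z.det⁻¹ = Z.det⁻¹ := by
    rw [map_inv₀, RingHom.map_det, RingHom.mapMatrix_apply, h, det_mul, hD, mul_one]
  obtain ⟨i₀⟩ := ‹Nonempty n›
  set S : Matrix n n F := diagonal (Function.update 1 i₀ Z.det⁻¹)
  have hS : S.map φ = S := by
    rw [diagonal_map (map_zero φ)]
    congr 1
    ext i
    rcases eq_or_ne i i₀ with rfl | hi
    · simp [hfix]
    · simp [hi]
  refine ⟨S * Z, ?_, ?_⟩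
  · rw [det_mul, det_diagonal, Finset.prod_update_of_mem (Finset.mem_univ _)]
    simp [inv_mul_cancel₀ hZ]
  · rw [Matrix.map_mul, hS, h, Matrix.mul_assoc]

theorem fin_two_mul_J_mul_transpose {R : Type*} [CommRing R] (A : Matrix (Fin 2) (Fin 2) R) :
    A * !![0, 1; -1, 0] * Aᵀ = A.det • !![0, 1; -1, 0] := by
  ext i j
  fin_cases i <;> fin_cases j <;>
    simp [mul_apply, Fin.sum_univ_two, det_fin_two] <;> ring

theorem blockDiagonal_mul_J_mul_transpose {o R : Type*} [Fintype o] [DecidableEq o] [CommRing R]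
    (Y : o → Matrix (Fin 2) (Fin 2) R) (hY : ∀ k, (Y k).det = 1) :
    blockDiagonal Y * blockDiagonal (fun _ => !![0, 1; -1, 0]) * (blockDiagonal Y)ᵀ
      = blockDiagonal (fun _ => !![0, 1; -1, 0]) := by
  rw [blockDiagonal_transpose, ← blockDiagonal_mul, ← blockDiagonal_mul]
  congr 1
  ext1 k
  rw [fin_two_mul_J_mul_transpose, hY k, one_smul]

theorem blockDiagonal_eq_inv_mul_map {m o R : Type*} [Fintype m] [DecidableEq m] [Fintype o]
    [DecidableEq o] [CommRing R] (φ : R →+* R) (Y D : o → Matrix m m R)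
    (hY : ∀ k, IsUnit (Y k).det) (hYD : ∀ k, (Y k).map φ = Y k * D k) :
    blockDiagonal D = (blockDiagonal Y)⁻¹ * (blockDiagonal Y).map φ := by
  have hmap : (blockDiagonal Y).map φ = blockDiagonal Y * blockDiagonal D := by
    rw [blockDiagonal_map _ _ (map_zero φ), ← blockDiagonal_mul]
    exact congrArg blockDiagonal (funext hYD)
  have hunit : IsUnit (blockDiagonal Y).det := by
    simpa only [det_blockDiagonal] using IsUnit.prod_univ_iff.mpr hY
  rw [hmap, ← Matrix.mul_assoc, nonsing_inv_mul _ hunit, Matrix.one_mul]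

end Matrix

theorem blockDiagonal_SL2_twisted_conjugate_to_one_in_Sp_general
    (F : Type*) [Field F] [CharZero F] (m : ℕ)
    (φ : F ≃+* F)
    (hφ : ∀ A : Matrix (Fin 2 × Fin m) (Fin 2 × Fin m) F, IsUnit A →
      ∃ X : Matrix (Fin 2 × Fin m) (Fin 2 × Fin m) F,
        AlgebraicIndependent ℚ (fun p : (Fin 2 × Fin m) × (Fin 2 × Fin m) => X p.1 p.2) ∧
        X.map ⇑φ = X * A)
    (D : Fin m → Matrix (Fin 2) (Fin 2) F) (hD : ∀ k : Fin m, (D k).det = 1) :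
    ∃ Y : Matrix (Fin 2 × Fin m) (Fin 2 × Fin m) F,
      Y * Matrix.blockDiagonal (fun _ : Fin m => (!![0, 1; -1, 0] : Matrix (Fin 2) (Fin 2) F)) * Yᵀ
        = Matrix.blockDiagonal (fun _ : Fin m => (!![0, 1; -1, 0] : Matrix (Fin 2) (Fin 2) F)) ∧
      Matrix.blockDiagonal D = Y⁻¹ * Y.map ⇑φ := by
  have hDunit : IsUnit (blockDiagonal D) := by
    simp [isUnit_iff_isUnit_det, det_blockDiagonal, hD]
  obtain ⟨X, hXindep, hX⟩ := hφ _ hDunit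
  let Z k : Matrix (Fin 2) (Fin 2) F := X.submatrix (·, k) (·, k)
  have hZmap k : (Z k).map φ = Z k * D k := by
    rw [← submatrix_map, hX, submatrix_mul_blockDiagonal]
  have hZdet k : (Z k).det ≠ 0 := hXindep.det_submatrix_ne_zero (Prod.mk_left_injective k)
  choose Y hYdet hYmap using fun k =>
    exists_det_eq_one_map_eq_mul φ.toRingHom (hZdet k) (hD k) (hZmap k)
  exact ⟨blockDiagonal Y, blockDiagonal_mul_J_mul_transpose Y hYdet,
    blockDiagonal_eq_inv_mul_map φ.toRingHom Y D (fun k => (hYdet k).symm ▸ isUnit_one) hYmap⟩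

/-- Let `F` be algebraically closed of characteristic zero, `n = 2m ≥ 2` even
(matrices are indexed by `Fin 2 × Fin m`), and `φ` a field automorphism of `F` such that for
every `A ∈ GLₙ(F)` there is a matrix `X` with entries algebraically independent over `ℚ`
satisfying `φₙ(X) = X * A`. If `D = D₁ ⊕ ⋯ ⊕ D_{n/2}` is block diagonal with all
`D_k ∈ SL₂(F)`, then `D = Y⁻¹ * φₙ(Y)` for some `Y` in the symplectic group `Spₙ(F)`
(where `Ω` is the direct sum of `n/2` copies of `J = !![0, 1; -1, 0]`). -/
theorem blockDiagonal_SL2_twisted_conjugate_to_one_in_Sp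
    (F : Type*) [Field F] [IsAlgClosed F] [CharZero F] (m : ℕ) (hm : 1 ≤ m)
    (φ : F ≃+* F)
    (hφ : ∀ A : Matrix (Fin 2 × Fin m) (Fin 2 × Fin m) F, IsUnit A →
      ∃ X : Matrix (Fin 2 × Fin m) (Fin 2 × Fin m) F,
        AlgebraicIndependent ℚ (fun p : (Fin 2 × Fin m) × (Fin 2 × Fin m) => X p.1 p.2) ∧
        X.map ⇑φ = X * A)
    (D : Fin m → Matrix (Fin 2) (Fin 2) F) (hD : ∀ k : Fin m, (D k).det = 1) :
    ∃ Y : Matrix (Fin 2 × Fin m) (Fin 2 × Fin m) F,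
      Y * Matrix.blockDiagonal (fun _ : Fin m => (!![0, 1; -1, 0] : Matrix (Fin 2) (Fin 2) F)) * Yᵀ
        = Matrix.blockDiagonal (fun _ : Fin m => (!![0, 1; -1, 0] : Matrix (Fin 2) (Fin 2) F)) ∧
      Matrix.blockDiagonal D = Y⁻¹ * Y.map ⇑φ :=
  blockDiagonal_SL2_twisted_conjugate_to_one_in_Sp_general F m φ hφ D hD
end

section
/- Let G be a group, φ an automorphism of G, and N a finite normal subgroup of G with φ(N) = N. Suppose that every element of the quotient group G/N is φ̄-conjugate to the identity coset, where φ̄ is the automorphism of G/N induced by φ (i.e., R(φ̄) = 1). Then every element of G is φ-conjugate to some element of N; consequently the Reidemeister number of φ satisfies R(φ) ≤ |N|, and in particular R(φ) is finite. -/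
/-- `x` and `y` are `ψ`-twisted conjugate: `x = z * y * ψ(z)⁻¹` for some `z`. -/
def twistedConj {G : Type*} [Group G] (ψ : G ≃* G) (x y : G) : Prop :=
  ∃ z : G, x = z * y * (ψ z)⁻¹

/-- The Reidemeister number of an automorphism `ψ`: the number of `ψ`-twisted conjugacy
classes (as a cardinal). -/
noncomputable def reidemeisterNumber {G : Type*} [Group G] (ψ : G ≃* G) : Cardinal :=
  Cardinal.mk (Quot (twistedConj ψ))

theorem twistedConj_inv_mul_mul {G : Type*} [Group G] (ψ : G ≃* G) (g z : G) :
    twistedConj ψ g (z⁻¹ * g * ψ z) :=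
  ⟨z, by group⟩

theorem exists_mem_twistedConj_of_forall_twistedConj_one_quotient {G : Type*} [Group G]
    (φ : G ≃* G) (N : Subgroup G) [N.Normal] (hN : N.map φ = N)
    (h1 : ∀ q : G ⧸ N, twistedConj (QuotientGroup.congr N N φ hN) q 1) (g : G) :
    ∃ m ∈ N, twistedConj φ g m := by
  obtain ⟨zq, hzq⟩ := h1 g
  obtain ⟨z, rfl⟩ := QuotientGroup.mk_surjective zq
  -- `ḡ = z̄ · φ̄(z̄)⁻¹` in `G ⧸ N` says exactly that `z⁻¹ g φ(z) ∈ N`.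
  refine ⟨z⁻¹ * g * φ z, ?_, twistedConj_inv_mul_mul φ g z⟩
  rw [← QuotientGroup.eq_one_iff, QuotientGroup.mk_mul, QuotientGroup.mk_mul,
    QuotientGroup.mk_inv, hzq]
  simp only [QuotientGroup.congr_mk, mul_one]
  group

theorem reidemeisterNumber_le_mk_of_forall_exists_mem_twistedConj {G : Type*} [Group G]
    (ψ : G ≃* G) (S : Set G) (hS : ∀ g : G, ∃ m ∈ S, twistedConj ψ g m) :
    reidemeisterNumber ψ ≤ Cardinal.mk S := by
  refine Cardinal.mk_le_of_surjective (f := fun m : S => Quot.mk (twistedConj ψ) (m : G)) ?_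
  rintro ⟨g⟩
  obtain ⟨m, hm, hgm⟩ := hS g
  exact ⟨⟨m, hm⟩, (Quot.sound hgm).symm⟩

/-- Let `φ` be an automorphism of `G` and `N` a finite normal subgroup with
`φ(N) = N`. If every element of `G ⧸ N` is twisted conjugate to the identity coset under the
induced automorphism `φ̄` (i.e. `R(φ̄) = 1`), then every element of `G` is `φ`-conjugate to
an element of `N`; consequently `R(φ) ≤ |N|`, and in particular `R(φ)` is finite. -/
theorem reidemeisterNumber_le_card_of_quotient_reidemeister_one
    {G : Type*} [Group G] (φ : G ≃* G) (N : Subgroup G) [N.Normal]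
    (hfin : Finite N) (hN : N.map φ = N)
    (h1 : ∀ q : G ⧸ N, twistedConj (QuotientGroup.congr N N φ hN) q 1) :
    (∀ g : G, ∃ m ∈ N, twistedConj φ g m) ∧
      reidemeisterNumber φ ≤ Nat.card N ∧ reidemeisterNumber φ < Cardinal.aleph0 := by
  have hconj := exists_mem_twistedConj_of_forall_twistedConj_one_quotient φ N hN h1
  have hle : reidemeisterNumber φ ≤ Nat.card N := by
    rw [Nat.cast_card]
    exact reidemeisterNumber_le_mk_of_forall_exists_mem_twistedConj φ N hconj
  exact ⟨hconj, hle, hle.trans_lt (Cardinal.natCast_lt_aleph0)⟩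
end
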